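/- arXiv:2602.21182 — 2 statements merged into one kernel-verified Lean document; each statement's English description precedes it below -/
import Mathlib

section
/- If a connected graph G contains k pairwise edge-disjoint spanning trees and each edge of G fails independently with probability at most p, then the probability that G becomes disconnected is at most C(|E|, k) · p^k, and in particular at most |E|^k · p^k. -/
/-!
Every spanning tree is a connected spanning subgraph, so the surviving graph can only be
disconnected if each of the `k` edge-disjoint trees loses an edge; hence at least `k` edges
have failed, and some `k`-set of edges has failed entirely. By independence a fixed `k`-set
fails entirely with probability `∏ pₑ ≤ p^k`, and the union bound over the `C(|E|, k)` such
sets gives the estimate.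
-/

open Finset

section EdgeFailure

variable {α : Type*} [Fintype α]

/-- The probability of the failure pattern `ω` (`ω e = true` when `e` fails) when each `e`
fails independently with probability `pe e`. -/
noncomputable def failureWeight (pe : α → ℝ) (ω : α → Bool) : ℝ :=
  ∏ e, if ω e then pe e else 1 - pe e

def failedSet (ω : α → Bool) : Finset α :=
  univ.filter fun e => ω e = true

theorem failureWeight_nonneg {pe : α → ℝ} (hp0 : ∀ e, 0 ≤ pe e) (hp1 : ∀ e, pe e ≤ 1)
    (ω : α → Bool) : 0 ≤ failureWeight pe ω :=
  prod_nonneg fun e _ => by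
    split_ifs
    · exact hp0 e
    · linarith [hp1 e]

variable [DecidableEq α]

theorem sum_failureWeight_of_subset_failedSet (pe : α → ℝ) (S : Finset α) :
    ∑ ω, (if S ⊆ failedSet ω then failureWeight pe ω else 0) = ∏ e ∈ S, pe e := by
  have hfactor : ∀ ω : α → Bool, (if S ⊆ failedSet ω then failureWeight pe ω else 0)
      = ∏ e, if ω e then pe e else if e ∈ S then 0 else 1 - pe e := by
    intro ω
    split_ifs with hS
    · refine prod_congr rfl fun e _ => ?_
      by_cases he : e ∈ S
      · simp [(mem_filter.mp (hS he)).2]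
      · simp [he]
    · obtain ⟨e, heS, he⟩ := not_subset.mp hS
      refine (prod_eq_zero (mem_univ e) ?_).symm
      simp_all [failedSet]
  -- The sum over `ω` factors over the edges: `pe e` on `S`, and `pe e + (1 - pe e) = 1` off `S`.
  rw [sum_congr rfl fun ω _ => hfactor ω, ← Fintype.prod_sum fun e (b : Bool) =>
    if b then pe e else if e ∈ S then 0 else 1 - pe e, ← Fintype.prod_ite_mem S pe]
  refine prod_congr rfl fun e _ => ?_
  by_cases he : e ∈ S <;> simp [he]

variable {pe : α → ℝ} {p : ℝ} {Q : (α → Bool) → Prop} [DecidablePred Q]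

theorem sum_failureWeight_le_choose_mul_pow (k : ℕ) (hp0 : ∀ e, 0 ≤ pe e)
    (hpe : ∀ e, pe e ≤ p) (hp1 : p ≤ 1) (hQ : ∀ ω, Q ω → k ≤ #(failedSet ω)) :
    ∑ ω, (if Q ω then failureWeight pe ω else 0)
      ≤ ((Fintype.card α).choose k : ℝ) * p ^ k := by
  have hW := failureWeight_nonneg hp0 fun e => (hpe e).trans hp1
  calc ∑ ω, (if Q ω then failureWeight pe ω else 0)
      ≤ ∑ ω, ∑ S ∈ powersetCard k univ,
          (if S ⊆ failedSet ω then failureWeight pe ω else 0) := by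
        -- union bound: an `ω` with `Q ω` has some failed `k`-set `S`
        refine sum_le_sum fun ω _ => ?_
        split_ifs with hq
        · obtain ⟨S, hS, hSk⟩ := exists_subset_card_eq (hQ ω hq)
          refine le_of_eq_of_le (if_pos hS).symm (single_le_sum (f := fun S =>
            if S ⊆ failedSet ω then failureWeight pe ω else 0) (fun _ _ => ?_)
            (mem_powersetCard.mpr ⟨subset_univ S, hSk⟩))
          split_ifs
          exacts [hW ω, le_rfl]
        · exact sum_nonneg fun S _ => by split_ifs <;> simp [hW ω]
    _ = ∑ S ∈ powersetCard k univ, ∏ e ∈ S, pe e := by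
        rw [sum_comm]
        exact sum_congr rfl fun S _ => sum_failureWeight_of_subset_failedSet pe S
    _ ≤ ∑ _S ∈ powersetCard k (univ : Finset α), p ^ k := by
        refine sum_le_sum fun S hS => ?_
        rw [← (mem_powersetCard.mp hS).2, ← prod_const]
        exact prod_le_prod (fun e _ => hp0 e) fun e _ => hpe e
    _ = ((Fintype.card α).choose k : ℝ) * p ^ k := by
        rw [sum_const, card_powersetCard, card_univ, nsmul_eq_mul]

theorem sum_failureWeight_le_card_pow_mul_pow (k : ℕ) (hp0 : ∀ e, 0 ≤ pe e)
    (hpe : ∀ e, pe e ≤ p) (hp1 : p ≤ 1) (hQ : ∀ ω, Q ω → k ≤ #(failedSet ω)) :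
    ∑ ω, (if Q ω then failureWeight pe ω else 0) ≤ (Fintype.card α : ℝ) ^ k * p ^ k := by
  refine (sum_failureWeight_le_choose_mul_pow k hp0 hpe hp1 hQ).trans ?_
  rcases isEmpty_or_nonempty α with hα | ⟨⟨e⟩⟩
  · cases k <;> simp
  · have hp : 0 ≤ p := (hp0 e).trans (hpe e)
    gcongr
    exact_mod_cast Nat.choose_le_pow _ _

end EdgeFailure

theorem Fintype.card_le_card_of_pairwise_disjoint {ι α : Type*} [Fintype ι] {A : ι → Set α}
    (hA : Pairwise fun i j => Disjoint (A i) (A j)) {F : Finset α}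
    (hF : ∀ i, ∃ a ∈ F, a ∈ A i) :
    Fintype.card ι ≤ #F := by
  choose f hfF hfA using hF
  refine card_le_card_of_injOn f (fun i _ => hfF i) fun i _ j _ hij => ?_
  by_contra hne
  exact Set.disjoint_left.mp (hA hne) (hfA i) (hij ▸ hfA j)

theorem SimpleGraph.Subgraph.exists_mem_edgeSet_of_not_connected_deleteEdges {V : Type*}
    {G : SimpleGraph V} {H : G.Subgraph} (hH : H.spanningCoe.Connected) {s : Set (Sym2 V)}
    (hs : ¬(G.deleteEdges s).Connected) : ∃ e ∈ H.edgeSet, e ∈ s := by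
  by_contra! h
  exact hs <| hH.mono fun v w hvw =>
    (SimpleGraph.deleteEdges_adj ..).mpr ⟨H.adj_sub hvw, h _ hvw⟩

open scoped Classical

theorem stmt_2_general {V : Type*} [Fintype V] [DecidableEq V] (G : SimpleGraph V)
    (k : ℕ) (T : Fin k → G.Subgraph)
    (hT : ∀ i, (T i).IsSpanning ∧ (T i).spanningCoe.IsTree)
    (hdisj : Pairwise fun i j => Disjoint (T i).edgeSet (T j).edgeSet)
    (p : ℝ) (pe : G.edgeSet → ℝ)
    (hp0 : ∀ e, 0 ≤ pe e) (hpe : ∀ e, pe e ≤ p) (hp1 : p ≤ 1) :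
    (∑ ω : G.edgeSet → Bool,
        if ¬ (G.deleteEdges {s : Sym2 V | ∃ h : s ∈ G.edgeSet, ω ⟨s, h⟩ = true}).Connected then
          ∏ e : G.edgeSet, (if ω e then pe e else 1 - pe e)
        else 0)
      ≤ (Nat.choose (Nat.card G.edgeSet) k : ℝ) * p ^ k ∧
    (∑ ω : G.edgeSet → Bool,
        if ¬ (G.deleteEdges {s : Sym2 V | ∃ h : s ∈ G.edgeSet, ω ⟨s, h⟩ = true}).Connected then
          ∏ e : G.edgeSet, (if ω e then pe e else 1 - pe e)
        else 0)
      ≤ (Nat.card G.edgeSet : ℝ) ^ k * p ^ k := by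
  have hfailed : ∀ ω : G.edgeSet → Bool,
      ¬ (G.deleteEdges {s : Sym2 V | ∃ h : s ∈ G.edgeSet, ω ⟨s, h⟩ = true}).Connected →
      k ≤ #(failedSet ω) := by
    intro ω hω
    simpa using Fintype.card_le_card_of_pairwise_disjoint
      (A := fun i => Subtype.val ⁻¹' (T i).edgeSet) (fun i j hij => (hdisj hij).preimage _)
      fun i => by
        obtain ⟨e, heT, he, hωe⟩ :=
          (T i).exists_mem_edgeSet_of_not_connected_deleteEdges (hT i).2.connected hω
        exact ⟨⟨e, he⟩, by simpa [failedSet] using hωe, heT⟩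
  rw [Nat.card_eq_fintype_card]
  exact ⟨sum_failureWeight_le_choose_mul_pow k hp0 hpe hp1 hfailed,
    sum_failureWeight_le_card_pow_mul_pow k hp0 hpe hp1 hfailed⟩

/-- If a connected graph `G` contains `k` edge-disjoint spanning trees and each edge fails
independently with probability at most `p`, then the probability that the surviving graph
is disconnected is at most `C(|E|,k) · p^k`, and in particular at most `|E|^k · p^k`. -/
theorem stmt_2 {V : Type*} [Fintype V] [DecidableEq V] (G : SimpleGraph V) (hG : G.Connected)
    (k : ℕ) (T : Fin k → G.Subgraph)
    (hT : ∀ i, (T i).IsSpanning ∧ (T i).spanningCoe.IsTree)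
    (hdisj : Pairwise fun i j => Disjoint (T i).edgeSet (T j).edgeSet)
    (p : ℝ) (pe : G.edgeSet → ℝ)
    (hp0 : ∀ e, 0 ≤ pe e) (hpe : ∀ e, pe e ≤ p) (hp1 : p ≤ 1) :
    (∑ ω : G.edgeSet → Bool,
        if ¬ (G.deleteEdges {s : Sym2 V | ∃ h : s ∈ G.edgeSet, ω ⟨s, h⟩ = true}).Connected then
          ∏ e : G.edgeSet, (if ω e then pe e else 1 - pe e)
        else 0)
      ≤ (Nat.choose (Nat.card G.edgeSet) k : ℝ) * p ^ k ∧
    (∑ ω : G.edgeSet → Bool,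
        if ¬ (G.deleteEdges {s : Sym2 V | ∃ h : s ∈ G.edgeSet, ω ⟨s, h⟩ = true}).Connected then
          ∏ e : G.edgeSet, (if ω e then pe e else 1 - pe e)
        else 0)
      ≤ (Nat.card G.edgeSet : ℝ) ^ k * p ^ k :=
  stmt_2_general G k T hT hdisj p pe hp0 hpe hp1
end

section
/- Kirchhoff's Matrix–Tree theorem: for a finite connected graph G, the number of spanning trees τ(G) equals the determinant of the matrix obtained from the Laplacian L = D − A by deleting any one row i and the corresponding column i, and this value is independent of the choice of i. -/
/-!
Orient every edge of `G` and let `M` be the resulting signed incidence matrix, so that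
`L = M Mᵀ`. Deleting row `i`, the Cauchy–Binet formula writes `det L⁽ⁱ⁾` as the sum of
`(det N)²` over the square submatrices `N` of `M⁽ⁱ⁾` given by `|V| - 1` edges. Since `M` is totally
unimodular, `det N ∈ {0, ±1}`, and `det N ≠ 0` exactly when the chosen edges connect `V`: a vector
in the left kernel of `N`, extended by `0` at `i`, is constant along the chosen edges. With
`|V| - 1` edges, connected means spanning tree, so every spanning tree contributes `1`.
-/

open Finset Matrix

namespace Matrix

variable {R W E : Type*} [CommRing R] [Fintype W] [DecidableEq W] [Fintype E]

lemma det_mul_eq_sum_det_submatrix_mul_prod (A : Matrix W E R) (B : Matrix E W R) :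
    (A * B).det = ∑ p : W → E, (A.submatrix id p).det * ∏ w, B (p w) w := by
  simp only [det_apply', mul_apply, prod_univ_sum, mul_sum, Fintype.piFinset_univ,
    submatrix_apply, id_eq, sum_mul]
  rw [sum_comm]
  refine sum_congr rfl fun p _ => sum_congr rfl fun σ _ => ?_
  rw [prod_mul_distrib]
  ring

lemma det_mul_eq_sum_embedding_det_submatrix_mul_prod [DecidableEq E] (A : Matrix W E R)
    (B : Matrix E W R) :
    (A * B).det = ∑ f : W ↪ E, (A.submatrix id f).det * ∏ w, B (f w) w := by
  rw [det_mul_eq_sum_det_submatrix_mul_prod, ← sum_filter_of_ne (p := Function.Injective)]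
  · rw [sum_subtype (p := Function.Injective) _ fun p => by simp only [mem_filter, mem_univ,
      true_and]]
    exact Fintype.sum_equiv (Equiv.subtypeInjectiveEquivEmbedding W E) _ _ fun _ => rfl
  · intro p _ hp
    contrapose! hp
    obtain ⟨w, w', hpw, hne⟩ := Function.not_injective_iff.mp hp
    rw [det_zero_of_column_eq hne fun v => by simp [hpw], zero_mul]

/-- The Cauchy–Binet formula, summing over injections rather than over subsets of `E`. -/
theorem factorial_mul_det_mul_eq_sum_embedding [DecidableEq E] (A : Matrix W E R)
    (B : Matrix E W R) :
    (Fintype.card W).factorial * (A * B).det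
      = ∑ f : W ↪ E, (A.submatrix id f).det * (B.submatrix f id).det := by
  have hperm (f : W ↪ E) : (A.submatrix id f).det * (B.submatrix f id).det
      = ∑ σ : Equiv.Perm W, (A.submatrix id (f ∘ σ)).det * ∏ w, B (f (σ w)) w := by
    rw [det_apply' (B.submatrix f id), mul_sum]
    refine sum_congr rfl fun σ _ => ?_
    rw [show A.submatrix id (f ∘ σ) = (A.submatrix id f).submatrix id σ from rfl, det_permute']
    simp only [submatrix_apply, id_eq]
    ring
  have hreindex (σ : Equiv.Perm W) :
      ∑ f : W ↪ E, (A.submatrix id (f ∘ σ)).det * ∏ w, B (f (σ w)) w = (A * B).det := by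
    rw [det_mul_eq_sum_embedding_det_submatrix_mul_prod]
    exact Fintype.sum_equiv (Equiv.embeddingCongr σ.symm (Equiv.refl E)) _ _ fun f => rfl
  rw [sum_congr rfl fun f _ => hperm f, sum_comm, sum_congr rfl fun σ _ => hreindex σ,
    sum_const, card_univ, Fintype.card_perm, nsmul_eq_mul]

lemma det_eq_zero_of_sum_col_eq_zero [Nonempty W] (M : Matrix W W R)
    (h : ∀ j, ∑ i, M i j = 0) : M.det = 0 := by
  have hker : (1 : W → R) ᵥ* M = 0 := funext fun j => by simpa [vecMul, dotProduct] using h j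
  have := congrFun (congrArg (· ᵥ* M.adjugate) hker) (Classical.arbitrary W)
  simpa [vecMul_vecMul, mul_adjugate, vecMul_smul] using this

lemma det_succ_column_of_forall_ne_eq_zero {k : ℕ} (M : Matrix (Fin (k + 1)) (Fin (k + 1)) R)
    {r j : Fin (k + 1)} (h : ∀ r' ≠ r, M r' j = 0) :
    M.det = (-1) ^ (r + j : ℕ) * M r j * (M.submatrix r.succAbove j.succAbove).det := by
  rw [det_succ_column M j, sum_eq_single r (fun r' _ hr' => by rw [h r' hr', mul_zero, zero_mul])
    (by simp)]

end Matrix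

lemma Matrix.vecMul_submatrix_val_of_apply_eq_zero {R V E ι : Type*} [CommRing R] [Fintype V]
    [DecidableEq V] {i : V} (A : Matrix V E R) {z : V → R} (hz : z i = 0) (c : ι → E) :
    (fun w : {j // j ≠ i} => z w) ᵥ* A.submatrix Subtype.val c = fun x => (z ᵥ* A) (c x) := by
  ext x
  simp only [vecMul, dotProduct, submatrix_apply]
  rw [← sum_erase univ (f := fun v => z v * A v (c x)) (show z i * A i (c x) = 0 by
    rw [hz, zero_mul])]
  exact (sum_subtype (univ.erase i) (by simp) (fun v => z v * A v (c x))).symm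

lemma Function.Embedding.nat_card_subtype_range_eq_factorial {ι β : Type*} [Finite ι]
    {S : Set β} [Finite S] (hS : Nat.card S = Nat.card ι) :
    Nat.card {c : ι ↪ β // Set.range c = S} = (Nat.card ι).factorial := by
  obtain ⟨e⟩ := Finite.card_eq.mp hS
  rw [← Nat.card_perm]
  refine Nat.card_congr (Equiv.trans ?_ ((Equiv.refl ι).equivCongr e))
  exact
    { toFun c := (Equiv.ofInjective c.1 c.1.injective).trans (Equiv.setCongr c.2)
      invFun σ := ⟨σ.toEmbedding.trans (Function.Embedding.subtype _), by
        ext b; simpa using ⟨fun ⟨x, hx⟩ => hx ▸ (σ x).2, fun hb => ⟨σ.symm ⟨b, hb⟩, by simp⟩⟩⟩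
      left_inv c := by ext; simp
      right_inv σ := by ext; simp }

lemma Nat.card_subtype_ne_add_one {α : Type*} [Finite α] (a : α) :
    Nat.card {x // x ≠ a} + 1 = Nat.card α := by
  have := Fintype.ofFinite α
  classical
  have := Fintype.card_pos_iff.mpr ⟨a⟩
  rw [Nat.card_eq_fintype_card, Nat.card_eq_fintype_card, Fintype.card_subtype_compl,
    Fintype.card_subtype_eq]
  omega

section OrientedIncidence

variable {R V E : Type*} [CommRing R] [DecidableEq V]

variable (R) in
/-- The incidence matrix of the directed multigraph whose arc `e` runs from `s e` to `t e`. -/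
def orientedIncMatrix (s t : E → V) : Matrix V E R :=
  fun v e => (if v = s e then 1 else 0) - (if v = t e then 1 else 0)

variable {s t : E → V}

lemma orientedIncMatrix_apply_of_ne {v : V} {e : E} (hs : v ≠ s e) (ht : v ≠ t e) :
    orientedIncMatrix R s t v e = 0 := by
  simp [orientedIncMatrix, hs, ht]

lemma orientedIncMatrix_apply_mem_range (v : V) (e : E) :
    orientedIncMatrix R s t v e ∈ Set.range SignType.cast := by
  unfold orientedIncMatrix
  split_ifs
  exacts [⟨0, by simp⟩, ⟨1, by simp⟩, ⟨-1, by simp⟩, ⟨0, by simp⟩]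

lemma vecMul_orientedIncMatrix [Fintype V] (z : V → R) (e : E) :
    (z ᵥ* orientedIncMatrix R s t) e = z (s e) - z (t e) := by
  simp [vecMul, dotProduct, orientedIncMatrix, mul_sub]

lemma sum_orientedIncMatrix_apply_of_mem {S : Finset V} {e : E} (hs : s e ∈ S) (ht : t e ∈ S) :
    ∑ v ∈ S, orientedIncMatrix R s t v e = 0 := by
  simp [orientedIncMatrix, sum_sub_distrib, hs, ht]

lemma exists_forall_ne_orientedIncMatrix_eq_zero {ι : Type*} [Nonempty ι] {f : ι → V}
    (hf : Function.Injective f) {e : E} (he : s e ∉ Set.range f ∨ t e ∉ Set.range f) :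
    ∃ r, ∀ r' ≠ r, orientedIncMatrix R s t (f r') e = 0 := by
  by_cases h : ∃ r, f r = s e ∨ f r = t e
  · obtain ⟨r, hr⟩ := h
    refine ⟨r, fun r' hr' => orientedIncMatrix_apply_of_ne ?_ ?_⟩ <;>
    · intro h'
      have := hf.ne hr'
      grind
  · simp only [not_exists, not_or] at h
    exact ⟨Classical.arbitrary ι, fun r' _ => orientedIncMatrix_apply_of_ne (h r').1 (h r').2⟩

/-- A square submatrix either has a column with at most one nonzero entry, along which we
expand, or all its columns contain both endpoints of their arc and so sum to zero. -/
theorem orientedIncMatrix_isTotallyUnimodular (s t : E → V) :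
    (orientedIncMatrix R s t).IsTotallyUnimodular := by
  intro k
  induction k with
  | zero => exact fun f g _ _ => ⟨1, by simp⟩
  | succ k ih =>
    intro f g hf hg
    by_cases hends : ∀ j, s (g j) ∈ Set.range f ∧ t (g j) ∈ Set.range f
    · refine ⟨0, (det_eq_zero_of_sum_col_eq_zero _ fun j => ?_).symm⟩
      change ∑ r, orientedIncMatrix R s t (f r) (g j) = 0
      rw [← sum_image (s := univ) (g := f) (f := fun v => orientedIncMatrix R s t v (g j))
        fun a _ b _ h => hf h]
      exact sum_orientedIncMatrix_apply_of_mem (by simpa using (hends j).1)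
        (by simpa using (hends j).2)
    · obtain ⟨j, hj⟩ := not_forall.mp hends
      obtain ⟨r, hcol⟩ := exists_forall_ne_orientedIncMatrix_eq_zero (R := R) hf
        (not_and_or.mp hj)
      rw [det_succ_column_of_forall_ne_eq_zero _ hcol, submatrix_submatrix]
      obtain ⟨a, ha⟩ := ih (f ∘ r.succAbove) (g ∘ j.succAbove)
        (hf.comp Fin.succAbove_right_injective) (hg.comp Fin.succAbove_right_injective)
      obtain ⟨b, hb⟩ := orientedIncMatrix_apply_mem_range (R := R) (s := s) (t := t) (f r) (g j)
      exact ⟨(-1) ^ (r + j : ℕ) * b * a, by simp [ha, hb]⟩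

end OrientedIncidence

namespace SimpleGraph

variable {R V ι : Type*} [CommRing R] {G : SimpleGraph V}

lemma Reachable.apply_eq_of_forall_adj {α : Type*} {H : SimpleGraph V} {z : V → α}
    (hz : ∀ u v, H.Adj u v → z u = z v) {u v : V} (huv : H.Reachable u v) : z u = z v := by
  obtain ⟨p⟩ := huv
  induction p with
  | nil => rfl
  | cons h _ ih => exact (hz _ _ h).trans ih

-- Any orientation of the edges would do; `Quot.out` picks one.
variable (R G) in
noncomputable def signedIncMatrix [DecidableEq V] : Matrix V G.edgeSet R :=
  orientedIncMatrix R (fun e => (Quot.out e.1 : V × V).1) (fun e => (Quot.out e.1 : V × V).2)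

lemma signedIncMatrix_mul_self_apply [DecidableEq V] [DecidableRel G.Adj] (u w : V)
    (e : G.edgeSet) :
    G.signedIncMatrix R u e * G.signedIncMatrix R w e
      = (if u = w then 1 else -1) * (G.incMatrix R u e * G.incMatrix R w e) := by
  obtain ⟨e, he⟩ := e
  have hout : s((Quot.out e : V × V).1, (Quot.out e : V × V).2) = e := Quot.out_eq e
  have hadj : G.Adj (Quot.out e : V × V).1 (Quot.out e : V × V).2 := by
    rwa [← mem_edgeSet, hout]
  simp only [signedIncMatrix, orientedIncMatrix]
  conv_rhs => rw [← hout]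
  simp only [incMatrix_apply', mk'_mem_incidenceSet_iff, hadj, true_and]
  have := hadj.ne
  split_ifs <;> grind

theorem lapMatrix_eq_signedIncMatrix_mul_transpose [Fintype V] [DecidableEq V]
    [DecidableRel G.Adj] :
    G.lapMatrix R = G.signedIncMatrix R * (G.signedIncMatrix R)ᵀ := by
  ext u w
  have hsum : (G.signedIncMatrix R * (G.signedIncMatrix R)ᵀ) u w
      = (if u = w then 1 else -1) * (G.incMatrix R * (G.incMatrix R)ᵀ) u w := by
    simp only [mul_apply, transpose_apply, signedIncMatrix_mul_self_apply, ← mul_sum]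
    congr 1
    rw [sum_set_coe (f := fun e => G.incMatrix R u e * G.incMatrix R w e)]
    refine sum_subset (subset_univ _) fun e _ he => ?_
    rw [G.incMatrix_of_notMem_incidenceSet fun h => he (by simpa using h.1), zero_mul]
  rw [hsum, incMatrix_mul_transpose]
  by_cases h : u = w <;> by_cases hadj : G.Adj u w <;>
    simp [lapMatrix, degMatrix, adjMatrix, h, hadj]

abbrev graphOfEdges (c : ι → G.edgeSet) : SimpleGraph V :=
  fromEdgeSet (Set.range fun x => (c x : Sym2 V))

lemma graphOfEdges_le (c : ι → G.edgeSet) : graphOfEdges c ≤ G := by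
  intro u v h
  obtain ⟨⟨x, hx⟩, -⟩ := (fromEdgeSet_adj _).mp h
  exact (mem_edgeSet G).mp (hx ▸ (c x).2)

lemma edgeSet_graphOfEdges (c : ι → G.edgeSet) :
    (graphOfEdges c).edgeSet = Set.range fun x => (c x : Sym2 V) := by
  refine (edgeSet_fromEdgeSet _).trans (sdiff_eq_left.mpr (Set.disjoint_left.mpr ?_))
  rintro _ ⟨x, rfl⟩
  exact fun h => G.not_isDiag_of_mem_edgeSet (c x).2 (Sym2.mem_diagSet.mp h)

lemma graphOfEdges_adj_out (c : ι → G.edgeSet) (x : ι) :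
    (graphOfEdges c).Adj (Quot.out (c x).1 : V × V).1 (Quot.out (c x).1 : V × V).2 := by
  have hout : s((Quot.out (c x).1 : V × V).1, (Quot.out (c x).1 : V × V).2) = c x :=
    Quot.out_eq _
  refine (fromEdgeSet_adj _).mpr ⟨⟨x, hout.symm⟩, ?_⟩
  exact G.ne_of_adj (by rw [← mem_edgeSet, hout]; exact (c x).2)

lemma apply_eq_of_graphOfEdges_adj {α : Type*} {c : ι → G.edgeSet} {z : V → α}
    (hz : ∀ x, z (Quot.out (c x).1 : V × V).1 = z (Quot.out (c x).1 : V × V).2) {u v : V}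
    (huv : (graphOfEdges c).Adj u v) : z u = z v := by
  obtain ⟨⟨x, hx⟩, -⟩ := (fromEdgeSet_adj _).mp huv
  have hout : s((Quot.out (c x).1 : V × V).1, (Quot.out (c x).1 : V × V).2) = c x :=
    Quot.out_eq _
  rcases Sym2.eq_iff.mp (hout.trans hx) with ⟨rfl, rfl⟩ | ⟨rfl, rfl⟩
  exacts [hz x, (hz x).symm]

lemma graphOfEdges_isTree_iff [Finite V] {c : ι ↪ G.edgeSet}
    (hcard : Nat.card ι + 1 = Nat.card V) :
    (graphOfEdges c).IsTree ↔ (graphOfEdges c).Connected := by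
  rw [isTree_iff_connected_and_card, edgeSet_graphOfEdges,
    Nat.card_range_of_injective (f := fun x => (c x : Sym2 V))
      (Subtype.val_injective.comp c.injective), hcard]
  exact and_iff_left rfl

lemma graphOfEdges_eq_iff {c : ι → G.edgeSet} {T : SimpleGraph V} (hT : T ≤ G) :
    graphOfEdges c = T ↔ Set.range c = Subtype.val ⁻¹' T.edgeSet := by
  have hsub : T.edgeSet ⊆ Set.range (Subtype.val : G.edgeSet → Sym2 V) :=
    fun e he => ⟨⟨e, edgeSet_subset_edgeSet.mpr hT he⟩, rfl⟩
  rw [← edgeSet_inj, edgeSet_graphOfEdges, ← Function.comp_def, Set.range_comp]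
  constructor
  · rintro h
    rw [← h, Set.preimage_image_eq _ Subtype.val_injective]
  · rintro h
    rw [h, Set.image_preimage_eq_of_subset hsub]

theorem det_signedIncMatrix_submatrix_ne_zero_iff [Fintype V] [DecidableEq V] [DecidableRel G.Adj]
    [IsDomain R]
    {i : V} (c : {j : V // j ≠ i} → G.edgeSet) :
    ((G.signedIncMatrix R).submatrix Subtype.val c).det ≠ 0 ↔ (graphOfEdges c).Connected := by
  constructor
  · intro hdet
    by_contra hconn
    obtain ⟨v, hv⟩ : ∃ v, ¬ (graphOfEdges c).Reachable v i := by
      by_contra! h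
      exact hconn ((connected_iff_exists_forall_reachable _).mpr ⟨i, fun v => (h v).symm⟩)
    let z : V → R := fun u => if (graphOfEdges c).Reachable u i then 0 else 1
    refine hdet (exists_vecMul_eq_zero_iff.mp ⟨fun w => z w, fun h => ?_, ?_⟩)
    · have hvi : v ≠ i := by rintro rfl; exact hv .rfl
      simpa [z, hv] using congrFun h ⟨v, hvi⟩
    · rw [vecMul_submatrix_val_of_apply_eq_zero _ (by simp [z])]
      funext x
      have hadj := graphOfEdges_adj_out c x
      have hiff : (graphOfEdges c).Reachable (Quot.out (c x).1 : V × V).1 i ↔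
          (graphOfEdges c).Reachable (Quot.out (c x).1 : V × V).2 i :=
        ⟨hadj.symm.reachable.trans, hadj.reachable.trans⟩
      simp only [signedIncMatrix, vecMul_orientedIncMatrix, z, hiff, sub_self, Pi.zero_apply]
  · intro hconn hdet
    obtain ⟨y, hy, hyM⟩ := exists_vecMul_eq_zero_iff.mpr hdet
    let z : V → R := fun u => if h : u = i then 0 else y ⟨u, h⟩
    have hzi : z i = 0 := dif_pos rfl
    have hzy : (fun w : {j // j ≠ i} => z w) = y := funext fun w => dif_neg w.2
    have hedge (x) : z (Quot.out (c x).1 : V × V).1 = z (Quot.out (c x).1 : V × V).2 := by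
      have := congrFun (vecMul_submatrix_val_of_apply_eq_zero (G.signedIncMatrix R) hzi c) x
      rw [hzy, hyM, signedIncMatrix, vecMul_orientedIncMatrix] at this
      exact sub_eq_zero.mp this.symm
    refine hy (hzy ▸ funext fun w => ?_)
    exact (Reachable.apply_eq_of_forall_adj (fun u v => apply_eq_of_graphOfEdges_adj hedge)
      (hconn.preconnected w i)).trans hzi

open scoped Classical in
theorem det_signedIncMatrix_submatrix_mul_self [Fintype V] [DecidableEq V] [DecidableRel G.Adj]
    [IsDomain R]
    {i : V} (c : {j : V // j ≠ i} ↪ G.edgeSet) :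
    ((G.signedIncMatrix R).submatrix Subtype.val c).det
        * ((G.signedIncMatrix R).submatrix Subtype.val c).det
      = if (graphOfEdges c).IsTree then 1 else 0 := by
  rw [graphOfEdges_isTree_iff (Nat.card_subtype_ne_add_one i),
    ← det_signedIncMatrix_submatrix_ne_zero_iff (R := R)]
  obtain ⟨a, ha⟩ := (isTotallyUnimodular_iff_fintype _).mp
    (orientedIncMatrix_isTotallyUnimodular (R := R) _ _) _ Subtype.val c
  rw [signedIncMatrix, ← ha]
  cases a <;> simp

theorem nat_card_embedding_graphOfEdges_isTree [Finite V] [Fintype ι] [DecidableEq ι]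
    (hcard : Nat.card ι + 1 = Nat.card V) :
    Nat.card {c : ι ↪ G.edgeSet // (graphOfEdges c).IsTree}
      = (Nat.card ι).factorial * Nat.card {T : SimpleGraph V // T ≤ G ∧ T.IsTree} := by
  classical
  have := Fintype.ofFinite V
  let φ : {c : ι ↪ G.edgeSet // (graphOfEdges c).IsTree} →
      {T : SimpleGraph V // T ≤ G ∧ T.IsTree} :=
    fun c => ⟨graphOfEdges c.1, graphOfEdges_le _, c.2⟩
  have hfiber (T : {T : SimpleGraph V // T ≤ G ∧ T.IsTree}) :
      Nat.card {c // φ c = T} = (Nat.card ι).factorial := by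
    have hiff (c : ι ↪ G.edgeSet) : (graphOfEdges c).IsTree ∧ graphOfEdges c = T.1 ↔
        Set.range c = Subtype.val ⁻¹' T.1.edgeSet := by
      rw [← graphOfEdges_eq_iff T.2.1]
      exact ⟨And.right, fun h => ⟨h ▸ T.2.2, h⟩⟩
    have hT := (isTree_iff_connected_and_card.mp T.2.2).2
    rw [Nat.card_congr ((Equiv.subtypeEquivRight fun c => Subtype.ext_iff).trans
      ((Equiv.subtypeSubtypeEquivSubtypeInter _ _).trans (Equiv.subtypeEquivRight hiff))),
      Function.Embedding.nat_card_subtype_range_eq_factorial (S := Subtype.val ⁻¹' T.1.edgeSet)]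
    rw [Nat.card_preimage_of_injective Subtype.val_injective
      fun e he => ⟨⟨e, edgeSet_subset_edgeSet.mpr T.2.1 he⟩, rfl⟩]
    omega
  rw [← Nat.card_congr (Equiv.sigmaFiberEquiv φ), Nat.card_sigma,
    sum_congr rfl fun T _ => hfiber T, sum_const, card_univ, smul_eq_mul, mul_comm]
  simp only [Nat.card_eq_fintype_card]

lemma nat_card_isSpanning_isTree_subgraph :
    Nat.card {H : G.Subgraph // H.IsSpanning ∧ H.spanningCoe.IsTree}
      = Nat.card {T : SimpleGraph V // T ≤ G ∧ T.IsTree} :=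
  Nat.card_congr
    { toFun H := ⟨H.1.spanningCoe, H.1.spanningCoe_le, H.2.2⟩
      invFun T := ⟨toSubgraph T.1 T.2.1, toSubgraph.isSpanning _ _, T.2.2⟩
      left_inv H := Subtype.ext (Subgraph.ext (Subgraph.isSpanning_iff.mp H.2.1).symm rfl)
      right_inv _ := rfl }

end SimpleGraph

open SimpleGraph in
theorem stmt_14_general {V : Type*} [Fintype V] [DecidableEq V] (G : SimpleGraph V)
    [DecidableRel G.Adj] (i : V) :
    (((G.lapMatrix ℝ).submatrix (fun a : {j : V // j ≠ i} => (a : V))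
        (fun a : {j : V // j ≠ i} => (a : V))).det)
      = (Nat.card {H : G.Subgraph // H.IsSpanning ∧ H.spanningCoe.IsTree} : ℝ) := by
  classical
  have hfact : ((Fintype.card {j : V // j ≠ i}).factorial : ℝ) ≠ 0 := by positivity
  refine mul_left_cancel₀ hfact ?_
  rw [lapMatrix_eq_signedIncMatrix_mul_transpose, submatrix_mul _ _ _ id _ Function.bijective_id,
    factorial_mul_det_mul_eq_sum_embedding]
  simp_rw [submatrix_submatrix, Function.comp_id, Function.id_comp, ← transpose_submatrix,
    det_transpose, det_signedIncMatrix_submatrix_mul_self, sum_boole]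
  rw [← Fintype.card_subtype, ← Nat.card_eq_fintype_card,
    nat_card_embedding_graphOfEdges_isTree (Nat.card_subtype_ne_add_one i),
    nat_card_isSpanning_isTree_subgraph, Nat.card_eq_fintype_card]
  exact Nat.cast_mul _ _

/-- Kirchhoff's Matrix–Tree theorem: for a finite connected graph `G`, the number of
spanning trees equals the determinant of the Laplacian with row `i` and column `i`
deleted, for every choice of `i` (hence the value is independent of `i`). -/
theorem stmt_14 {V : Type*} [Fintype V] [DecidableEq V] (G : SimpleGraph V)
    [DecidableRel G.Adj] (hG : G.Connected) (i : V) :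
    (((G.lapMatrix ℝ).submatrix (fun a : {j : V // j ≠ i} => (a : V))
        (fun a : {j : V // j ≠ i} => (a : V))).det)
      = (Nat.card {H : G.Subgraph // H.IsSpanning ∧ H.spanningCoe.IsTree} : ℝ) :=
  stmt_14_general G i
end
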